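/- arXiv:2405.18010 — 3 statements merged into one kernel-verified Lean document; each statement's English description precedes it below -/
import Mathlib

section
/- Let v^1, ..., v^n be vectors in ℝ^d and let 1 ≤ m < n. Suppose v^j[0] > 0 for all j ≤ m and v^i[0] = 0 for all i > m. Then for every i > m, the vector v^i is a nonnegative combination of {v^j : j ≠ i} if and only if v^i is a nonnegative combination of the smaller family {v^j : j > m, j ≠ i}. -/
/-!
Evaluating a nonnegative combination `v i = ∑ x j • v j` at the first coordinate gives
`0 = ∑ x j * v j 0`, a sum of nonnegative terms; so every generator with positive first
coordinate gets coefficient zero and can be dropped from the combination.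
-/

open Finset

section NonnegComb

variable (𝕜 : Type*) {ι E : Type*} [Semiring 𝕜] [PartialOrder 𝕜] [AddCommMonoid E] [Module 𝕜 E]

def IsNonnegCombOn (s : Finset ι) (v : ι → E) (w : E) : Prop :=
  ∃ x : ι → 𝕜, (∀ j, 0 ≤ x j) ∧ w = ∑ j ∈ s, x j • v j

variable {𝕜} {s t : Finset ι} {v : ι → E} {w : E}

theorem IsNonnegCombOn.mono (hts : t ⊆ s) (h : IsNonnegCombOn 𝕜 t v w) :
    IsNonnegCombOn 𝕜 s v w := by
  classical
  obtain ⟨x, hx, hw⟩ := h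
  refine ⟨fun j => if j ∈ t then x j else 0, fun j => ?_, ?_⟩
  · dsimp only
    split_ifs
    exacts [hx j, le_rfl]
  · rw [hw, ← sum_subset hts fun j _ hj => by simp [hj]]
    exact sum_congr rfl fun j hj => by simp [hj]

variable [IsOrderedRing 𝕜] [NoZeroDivisors 𝕜]

theorem IsNonnegCombOn.of_superset (f : E →ₗ[𝕜] 𝕜) (hts : t ⊆ s) (hfw : f w = 0)
    (hf_nonneg : ∀ j ∈ s, 0 ≤ f (v j)) (hf_pos : ∀ j ∈ s, j ∉ t → 0 < f (v j))
    (h : IsNonnegCombOn 𝕜 s v w) : IsNonnegCombOn 𝕜 t v w := by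
  obtain ⟨x, hx, hw⟩ := h
  have hsum : ∑ j ∈ s, x j * f (v j) = 0 := by
    simpa only [hw, map_sum, map_smul, smul_eq_mul] using hfw
  have hterm := (sum_eq_zero_iff_of_nonneg fun j hj => mul_nonneg (hx j) (hf_nonneg j hj)).1 hsum
  refine ⟨x, hx, hw.trans (sum_subset hts fun j hjs hjt => ?_).symm⟩
  rw [(mul_eq_zero.1 (hterm j hjs)).resolve_right (hf_pos j hjs hjt).ne', zero_smul]

theorem isNonnegCombOn_iff_of_superset (f : E →ₗ[𝕜] 𝕜) (hts : t ⊆ s) (hfw : f w = 0)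
    (hf_nonneg : ∀ j ∈ s, 0 ≤ f (v j)) (hf_pos : ∀ j ∈ s, j ∉ t → 0 < f (v j)) :
    IsNonnegCombOn 𝕜 s v w ↔ IsNonnegCombOn 𝕜 t v w :=
  ⟨IsNonnegCombOn.of_superset f hts hfw hf_nonneg hf_pos, IsNonnegCombOn.mono hts⟩

end NonnegComb

theorem statement_3_general (n d m : ℕ) (hd : 0 < d)
    (v : Fin n → Fin d → ℝ)
    (hpos : ∀ j : Fin n, (j : ℕ) < m → 0 < v j ⟨0, hd⟩)
    (hzero : ∀ i : Fin n, m ≤ (i : ℕ) → v i ⟨0, hd⟩ = 0) :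
    ∀ i : Fin n, m ≤ (i : ℕ) →
      ((∃ x : Fin n → ℝ, (∀ j, 0 ≤ x j) ∧
          v i = ∑ j ∈ Finset.univ.erase i, x j • v j) ↔
        (∃ x : Fin n → ℝ, (∀ j, 0 ≤ x j) ∧
          v i = ∑ j ∈ Finset.univ.filter (fun j : Fin n => m ≤ (j : ℕ) ∧ j ≠ i),
            x j • v j)) := by
  intro i hi
  let e₀ : (Fin d → ℝ) →ₗ[ℝ] ℝ := LinearMap.proj ⟨0, hd⟩
  have hsub : univ.filter (fun j : Fin n => m ≤ (j : ℕ) ∧ j ≠ i) ⊆ univ.erase i :=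
    fun j hj => mem_erase.2 ⟨(mem_filter.1 hj).2.2, mem_univ j⟩
  have hnonneg : ∀ j ∈ univ.erase i, 0 ≤ e₀ (v j) := fun j _ =>
    (lt_or_ge (j : ℕ) m).elim (fun h => (hpos j h).le) fun h => (hzero j h).ge
  have hpos_dropped : ∀ j ∈ univ.erase i,
      j ∉ univ.filter (fun j : Fin n => m ≤ (j : ℕ) ∧ j ≠ i) → 0 < e₀ (v j) := by
    intro j hj hjt
    refine hpos j (not_le.1 fun hjm => hjt ?_)
    exact mem_filter.2 ⟨mem_univ j, hjm, (mem_erase.1 hj).1⟩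
  exact isNonnegCombOn_iff_of_superset e₀ hsub (hzero i hi) hnonneg hpos_dropped

/-- Generalization of Proposition 4.1 (Remark 4.2): if the first `m` vectors
(indices `j` with `j.val < m`, i.e. the paper's `v^1, …, v^m`) have positive
first coordinate and the remaining ones (indices with `m ≤ i.val`, i.e.
`v^{m+1}, …, v^n`) have first coordinate zero, then for every `i` in the
latter group, `v i` is a nonnegative combination of all the other vectors if
and only if it is a nonnegative combination of the other vectors of the
latter group. -/
theorem statement_3 (n d m : ℕ) (hd : 0 < d) (hm1 : 1 ≤ m) (hmn : m < n)
    (v : Fin n → Fin d → ℝ)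
    (hpos : ∀ j : Fin n, (j : ℕ) < m → 0 < v j ⟨0, hd⟩)
    (hzero : ∀ i : Fin n, m ≤ (i : ℕ) → v i ⟨0, hd⟩ = 0) :
    ∀ i : Fin n, m ≤ (i : ℕ) →
      ((∃ x : Fin n → ℝ, (∀ j, 0 ≤ x j) ∧
          v i = ∑ j ∈ Finset.univ.erase i, x j • v j) ↔
        (∃ x : Fin n → ℝ, (∀ j, 0 ≤ x j) ∧
          v i = ∑ j ∈ Finset.univ.filter (fun j : Fin n => m ≤ (j : ℕ) ∧ j ≠ i),
            x j • v j)) :=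
  statement_3_general n d m hd v hpos hzero
end

section
/- Let v^1, ..., v^n be vectors in ℝ^d (n ≥ 3). Suppose v^1[0] > 0, v^2[0] < 0 and v^i[0] = 0 for all i ≥ 3. Set w := v^1[0] · v^2 − v^2[0] · v^1. Then for every i ≥ 3, the vector v^i is a nonnegative combination of {v^j : j ≠ i} if and only if v^i is a nonnegative combination of the family {v^j : j ≥ 3, j ≠ i} ∪ {w}. -/
/-- Reduction part of Proposition 4.4: with `v 0` (the paper's `v^1`) having
positive first coordinate, `v 1` (the paper's `v^2`) negative first
coordinate, and all others (indices with value `≥ 2`, the paper's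
`v^3, …, v^n`) first coordinate zero, a vector `v i` (with `2 ≤ i.val`) is a
nonnegative combination of the other generators if and only if it is a
nonnegative combination of `{v j : 2 ≤ j.val, j ≠ i}` together with the
modified vector `w = v^1[0]·v^2 − v^2[0]·v^1`. -/
theorem statement_6 (n d : ℕ) (hn : 2 < n) (hd : 0 < d)
    (v : Fin n → Fin d → ℝ)
    (h1 : 0 < v ⟨0, by omega⟩ ⟨0, hd⟩)
    (h2 : v ⟨1, by omega⟩ ⟨0, hd⟩ < 0)
    (h0 : ∀ i : Fin n, 2 ≤ (i : ℕ) → v i ⟨0, hd⟩ = 0)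
    (w : Fin d → ℝ)
    (hw : w = v ⟨0, by omega⟩ ⟨0, hd⟩ • v ⟨1, by omega⟩ -
              v ⟨1, by omega⟩ ⟨0, hd⟩ • v ⟨0, by omega⟩) :
    ∀ i : Fin n, 2 ≤ (i : ℕ) →
      ((∃ x : Fin n → ℝ, (∀ j, 0 ≤ x j) ∧
          v i = ∑ j ∈ Finset.univ.erase i, x j • v j) ↔
        (∃ x : Fin n → ℝ, ∃ c : ℝ, (∀ j, 0 ≤ x j) ∧ 0 ≤ c ∧
          v i = (∑ j ∈ Finset.univ.filter (fun j : Fin n => 2 ≤ (j : ℕ) ∧ j ≠ i),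
              x j • v j) + c • w)) := by
  intro i hi
  have hn0 : 0 < n := by omega
  have hn1 : 1 < n := by omega
  set a := v ⟨0, by omega⟩ ⟨0, hd⟩ with ha
  set b := v ⟨1, by omega⟩ ⟨0, hd⟩ with hb
  set S := Finset.univ.filter (fun j : Fin n => 2 ≤ (j : ℕ) ∧ j ≠ i) with hSdef
  have hS : Finset.univ.erase i =
      insert ⟨0, hn0⟩ (insert ⟨1, hn1⟩ S) := by
    ext j
    simp only [hSdef, Finset.mem_erase, Finset.mem_insert, Finset.mem_filter,
      Finset.mem_univ, true_and, and_true, ne_eq, Fin.ext_iff]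
    omega
  have h0S : (⟨0, hn0⟩ : Fin n) ∉ insert (⟨1, hn1⟩ : Fin n) S := by
    simp only [hSdef, Finset.mem_insert, Finset.mem_filter, Finset.mem_univ,
      true_and, ne_eq, Fin.ext_iff]
    omega
  have h1S : (⟨1, hn1⟩ : Fin n) ∉ S := by
    simp only [hSdef, Finset.mem_filter, Finset.mem_univ, true_and, ne_eq, Fin.ext_iff]
    omega
  have hsum : ∀ y : Fin n → ℝ, ∑ j ∈ Finset.univ.erase i, y j • v j =
      y ⟨0, hn0⟩ • v ⟨0, hn0⟩ + y ⟨1, hn1⟩ • v ⟨1, hn1⟩ + ∑ j ∈ S, y j • v j := by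
    intro y
    rw [hS, Finset.sum_insert h0S, Finset.sum_insert h1S, add_assoc]
  have ha0 : a ≠ 0 := ne_of_gt h1
  constructor
  · rintro ⟨x, hx, hexp⟩
    rw [hsum x] at hexp
    have hcoord := congrFun hexp ⟨0, hd⟩
    simp only [Pi.add_apply, Pi.smul_apply, smul_eq_mul, Finset.sum_apply] at hcoord
    rw [h0 i hi] at hcoord
    have hSzero : ∑ j ∈ S, x j * v j ⟨0, hd⟩ = 0 := by
      apply Finset.sum_eq_zero
      intro j hj
      rw [hSdef, Finset.mem_filter] at hj
      rw [h0 j hj.2.1, mul_zero]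
    rw [hSzero] at hcoord
    -- hcoord : 0 = x 0 * a + x 1 * b + 0
    refine ⟨x, x ⟨1, hn1⟩ / a, hx, div_nonneg (hx _) h1.le, ?_⟩
    rw [hexp]
    have key : x ⟨0, hn0⟩ • v ⟨0, hn0⟩ + x ⟨1, hn1⟩ • v ⟨1, hn1⟩
        = (x ⟨1, hn1⟩ / a) • w := by
      rw [hw, smul_sub, smul_smul, smul_smul]
      have e1 : x ⟨1, hn1⟩ / a * a = x ⟨1, hn1⟩ := by field_simp
      have e2 : x ⟨1, hn1⟩ / a * b = -(x ⟨0, hn0⟩) := by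
        field_simp
        nlinarith [hcoord]
      rw [e1, e2, neg_smul, sub_neg_eq_add, add_comm]
    rw [← key]
    abel
  · rintro ⟨x, c, hx, hc, hexp⟩
    refine ⟨fun j => if j = ⟨0, hn0⟩ then -(c*b) else if j = ⟨1, hn1⟩ then c*a
      else if 2 ≤ (j : ℕ) ∧ j ≠ i then x j else 0, ?_, ?_⟩
    · intro j
      dsimp only
      split_ifs with p1 p2 p3
      · nlinarith
      · positivity
      · exact hx j
      · exact le_rfl
    · beta_reduce
      rw [hsum]
      have e0 : (⟨1, hn1⟩ : Fin n) ≠ (⟨0, hn0⟩ : Fin n) := by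
        simp [Fin.ext_iff]
      simp only [if_pos rfl, if_neg e0, eq_self_iff_true, if_true]
      have hSx : ∑ j ∈ S, (if j = ⟨0, hn0⟩ then -(c*b) else if j = ⟨1, hn1⟩ then c*a
          else if 2 ≤ (j : ℕ) ∧ j ≠ i then x j else 0) • v j = ∑ j ∈ S, x j • v j := by
        apply Finset.sum_congr rfl
        intro j hj
        rw [hSdef, Finset.mem_filter] at hj
        have j0 : j ≠ ⟨0, hn0⟩ := by simp [Fin.ext_iff]; omega
        have j1 : j ≠ ⟨1, hn1⟩ := by simp [Fin.ext_iff]; omega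
        rw [if_neg j0, if_neg j1, if_pos hj.2]
      rw [hSx, hexp, hw]
      module
end

section
/- Let v^1, ..., v^n be vectors in ℝ^d and let 2 ≤ m < n. Suppose v^1[0] > 0, v^k[0] < 0 for all 2 ≤ k ≤ m, and v^i[0] = 0 for all i > m. For 2 ≤ k ≤ m set w^k := v^1[0] · v^k − v^k[0] · v^1. Then for every i > m, the vector v^i is a nonnegative combination of {v^j : j ≠ i} if and only if v^i is a nonnegative combination of the family {v^j : j > m, j ≠ i} ∪ {w^2, ..., w^m}. -/
/-!
This is one step of Fourier–Motzkin elimination along the first coordinate `f`. In a nonnegative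
combination of the other generators representing `v^i`, the `v^{m+1}, …, v^n`-part lies in
`ker f`, hence so does the rest, `c • v^1 + ∑ y_k • v^k`. Its vanishing `f`-value gives
`c = -∑ y_k v^k[0] / v^1[0]`, which turns it into `∑ (y_k / v^1[0]) • w^k`. Conversely each `w^k`
is a nonnegative combination of `v^1` and `v^k`, since `v^k[0] < 0 < v^1[0]`.
-/

open Finset

theorem sum_smul_smul_sub_smul {ι R E : Type*} [Semiring R] [AddCommGroup E] [Module R E]
    (K : Finset ι) (y b : ι → R) (a : R) (p : ι → E) (u : E) :
    ∑ k ∈ K, y k • (a • p k - b k • u) = ∑ k ∈ K, (y k * a) • p k - (∑ k ∈ K, y k * b k) • u := by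
  simp only [smul_sub, smul_smul, sum_sub_distrib, sum_smul]

theorem exists_nonneg_sum_insert_union_iff {ι R E : Type*} [DecidableEq ι] [Semiring R]
    [PartialOrder R] [AddCommMonoid E] [Module R E] {z : ι} {K F : Finset ι} (hzK : z ∉ K)
    (hzF : z ∉ F) (hKF : Disjoint K F) (v : ι → E) (e : E) :
    (∃ x : ι → R, (∀ j, 0 ≤ x j) ∧ e = ∑ j ∈ insert z (K ∪ F), x j • v j) ↔
      ∃ (c : R) (x y : ι → R), 0 ≤ c ∧ (∀ j, 0 ≤ x j) ∧ (∀ k, 0 ≤ y k) ∧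
        e = c • v z + ∑ k ∈ K, y k • v k + ∑ j ∈ F, x j • v j := by
  have hzKF : z ∉ K ∪ F := by simp [hzK, hzF]
  constructor
  · rintro ⟨x, hx, rfl⟩
    refine ⟨x z, x, x, hx z, hx, hx, ?_⟩
    rw [sum_insert hzKF, sum_union hKF, add_assoc]
  · rintro ⟨c, x, y, hc, hx, hy, rfl⟩
    refine ⟨Function.update (K.piecewise y x) z c, fun j => ?_, ?_⟩
    · rcases eq_or_ne j z with rfl | hj
      · simpa using hc
      · rw [Function.update_of_ne hj]
        by_cases hjK : j ∈ K
        · simpa [hjK] using hy j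
        · simpa [hjK] using hx j
    · have hK : ∑ k ∈ K, K.piecewise y x k • v k = ∑ k ∈ K, y k • v k :=
        sum_congr rfl fun k hk => by rw [piecewise_eq_of_mem _ _ _ hk]
      have hF : ∑ j ∈ F, K.piecewise y x j • v j = ∑ j ∈ F, x j • v j :=
        sum_congr rfl fun j hj => by rw [piecewise_eq_of_notMem _ _ _ (disjoint_right.1 hKF hj)]
      have hKF' : ∑ j ∈ K ∪ F, Function.update (K.piecewise y x) z c j • v j =
          ∑ j ∈ K ∪ F, K.piecewise y x j • v j :=
        sum_congr rfl fun j hj => by rw [Function.update_of_ne (ne_of_mem_of_not_mem hj hzKF)]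
      rw [sum_insert hzKF, Function.update_self, hKF', sum_union hKF, hK, hF, add_assoc]

section Elimination

variable {ι 𝕜 E : Type*} [Field 𝕜] [LinearOrder 𝕜] [IsStrictOrderedRing 𝕜] [AddCommGroup E]
  [Module 𝕜 E]

theorem exists_nonneg_smul_add_sum_iff_of_map_eq_zero (f : E →ₗ[𝕜] 𝕜) (u : E) (p : ι → E)
    (K : Finset ι) (hu : 0 < f u) (hp : ∀ k ∈ K, f (p k) ≤ 0) {r : E} (hr : f r = 0) :
    (∃ (c : 𝕜) (y : ι → 𝕜), 0 ≤ c ∧ (∀ k, 0 ≤ y k) ∧ r = c • u + ∑ k ∈ K, y k • p k) ↔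
      ∃ y : ι → 𝕜, (∀ k, 0 ≤ y k) ∧ r = ∑ k ∈ K, y k • (f u • p k - f (p k) • u) := by
  constructor
  · rintro ⟨c, y, -, hy, rfl⟩
    have hcancel : c * f u + ∑ k ∈ K, y k * f (p k) = 0 := by simpa using hr
    refine ⟨fun k => y k / f u, fun k => div_nonneg (hy k) hu.le, ?_⟩
    have hc : ∑ k ∈ K, y k / f u * f (p k) = -c := by
      have hsum : ∑ k ∈ K, y k / f u * f (p k) = (∑ k ∈ K, y k * f (p k)) / f u := by
        rw [sum_div]
        exact sum_congr rfl fun k _ => by ring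
      rw [hsum, div_eq_iff hu.ne']
      linarith
    rw [sum_smul_smul_sub_smul, hc, neg_smul, sub_neg_eq_add, add_comm]
    congr 1
    exact sum_congr rfl fun k _ => by rw [div_mul_cancel₀ _ hu.ne']
  · rintro ⟨y, hy, rfl⟩
    refine ⟨∑ k ∈ K, y k * -f (p k), fun k => y k * f u, ?_, fun k => mul_nonneg (hy k) hu.le, ?_⟩
    · exact sum_nonneg fun k hk => mul_nonneg (hy k) (neg_nonneg.2 (hp k hk))
    · rw [sum_smul_smul_sub_smul, sub_eq_neg_add]
      simp only [mul_neg, sum_neg_distrib, neg_smul]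

theorem exists_nonneg_combination_iff_eliminate (f : E →ₗ[𝕜] 𝕜) (v w : ι → E) (z : ι)
    (K F : Finset ι) (hz : 0 < f (v z)) (hK : ∀ k ∈ K, f (v k) ≤ 0) (hF : ∀ j ∈ F, f (v j) = 0)
    (hw : ∀ k ∈ K, w k = f (v z) • v k - f (v k) • v z) {t : E} (ht : f t = 0) :
    (∃ (c : 𝕜) (x y : ι → 𝕜), 0 ≤ c ∧ (∀ j, 0 ≤ x j) ∧ (∀ k, 0 ≤ y k) ∧
        t = c • v z + ∑ k ∈ K, y k • v k + ∑ j ∈ F, x j • v j) ↔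
      ∃ x y : ι → 𝕜, (∀ j, 0 ≤ x j) ∧ (∀ k, 0 ≤ y k) ∧
        t = ∑ j ∈ F, x j • v j + ∑ k ∈ K, y k • w k := by
  have hw' (y : ι → 𝕜) : ∑ k ∈ K, y k • w k = ∑ k ∈ K, y k • (f (v z) • v k - f (v k) • v z) :=
    sum_congr rfl fun k hk => by rw [hw k hk]
  have hr (x : ι → 𝕜) : f (t - ∑ j ∈ F, x j • v j) = 0 := by
    rw [map_sub, ht, map_sum, sum_eq_zero fun j hj => by rw [map_smul, hF j hj, smul_zero],
      sub_zero]
  constructor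
  · rintro ⟨c, x, y, hc, hx, hy, h⟩
    obtain ⟨y', hy', h'⟩ := (exists_nonneg_smul_add_sum_iff_of_map_eq_zero f (v z) v K hz hK
      (hr x)).1 ⟨c, y, hc, hy, by rw [h, add_sub_cancel_right]⟩
    exact ⟨x, y', hx, hy', by rw [hw', ← h', add_sub_cancel]⟩
  · rintro ⟨x, y, hx, hy, h⟩
    obtain ⟨c, y', hc, hy', h'⟩ := (exists_nonneg_smul_add_sum_iff_of_map_eq_zero f (v z) v K hz hK
      (hr x)).2 ⟨y, hy, by rw [h, ← hw', add_sub_cancel_left]⟩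
    exact ⟨c, x, y', hc, hx, hy', by rw [← h', sub_add_cancel]⟩

end Elimination

/-- With 0-based indexing, `v 0` is the paper's `v^1`, the indices `1 ≤ k < m` are the paper's
`v^2, …, v^m`, and the indices `m ≤ i` are the paper's `v^{m+1}, …, v^n`. -/
theorem statement_8 (n d m : ℕ) (hd : 0 < d) (hm2 : 2 ≤ m) (hmn : m < n)
    (v : Fin n → Fin d → ℝ)
    (h1 : 0 < v ⟨0, by omega⟩ ⟨0, hd⟩)
    (hneg : ∀ k : Fin n, 1 ≤ (k : ℕ) → (k : ℕ) < m → v k ⟨0, hd⟩ < 0)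
    (hzero : ∀ i : Fin n, m ≤ (i : ℕ) → v i ⟨0, hd⟩ = 0)
    (w : Fin n → Fin d → ℝ)
    (hw : ∀ k : Fin n, 1 ≤ (k : ℕ) → (k : ℕ) < m →
      w k = v ⟨0, by omega⟩ ⟨0, hd⟩ • v k - v k ⟨0, hd⟩ • v ⟨0, by omega⟩) :
    ∀ i : Fin n, m ≤ (i : ℕ) →
      ((∃ x : Fin n → ℝ, (∀ j, 0 ≤ x j) ∧
          v i = ∑ j ∈ Finset.univ.erase i, x j • v j) ↔
        (∃ x y : Fin n → ℝ, (∀ j, 0 ≤ x j) ∧ (∀ k, 0 ≤ y k) ∧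
          v i = (∑ j ∈ Finset.univ.filter (fun j : Fin n => m ≤ (j : ℕ) ∧ j ≠ i),
              x j • v j) +
            ∑ k ∈ Finset.univ.filter
                (fun k : Fin n => 1 ≤ (k : ℕ) ∧ (k : ℕ) < m),
              y k • w k)) := by
  intro i hi
  set z : Fin n := ⟨0, by omega⟩
  set K := univ.filter fun k : Fin n => 1 ≤ (k : ℕ) ∧ (k : ℕ) < m
  set F := univ.filter fun j : Fin n => m ≤ (j : ℕ) ∧ j ≠ i
  have hzK : z ∉ K := by simp [K, z]
  have hzF : z ∉ F := by simp [F, z]; omega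
  have hKF : Disjoint K F := disjoint_filter.2 fun j _ hj => by omega
  have hsplit : univ.erase i = insert z (K ∪ F) := by
    ext j
    simp only [mem_erase, mem_univ, and_true, mem_insert, mem_union, mem_filter, true_and, K, F,
      z, Fin.ext_iff]
    omega
  rw [hsplit, exists_nonneg_sum_insert_union_iff hzK hzF hKF]
  exact exists_nonneg_combination_iff_eliminate (LinearMap.proj ⟨0, hd⟩) v w z K F h1
    (fun k hk => (hneg k (mem_filter.1 hk).2.1 (mem_filter.1 hk).2.2).le)
    (fun j hj => hzero j (mem_filter.1 hj).2.1)
    (fun k hk => hw k (mem_filter.1 hk).2.1 (mem_filter.1 hk).2.2) (hzero i hi)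
end
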